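/- Let i : P → Q be a dense embedding between partial orders, and let H be a filter on Q such that H ∩ i''D ≠ ∅ for every dense subset D of P. Then G := i⁻¹(H) is a filter on P that meets every dense subset of P, and H = {q ∈ Q : there exists p ∈ G with i(p) ≤ q}. -/
import Mathlib


/-- A set `G ⊆ P` is a filter on the partial order `P`:
upward closed and downward directed. -/
def IsPOFilter {P : Type*} [PartialOrder P] (G : Set P) : Prop :=
  (∀ p q : P, p ∈ G → p ≤ q → q ∈ G) ∧
  (∀ p q : P, p ∈ G → q ∈ G → ∃ r ∈ G, r ≤ p ∧ r ≤ q)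

/-- Two elements of a partial order are compatible if they have a common lower bound. -/
def Compat {P : Type*} [PartialOrder P] (p q : P) : Prop :=
  ∃ r : P, r ≤ p ∧ r ≤ q

/-- A subset `D` of a partial order is dense if every element has a lower bound in `D`. -/
def DenseBelow {P : Type*} [PartialOrder P] (D : Set P) : Prop :=
  ∀ p : P, ∃ q ∈ D, q ≤ p

/-- `i : P → Q` is a dense embedding of partial orders: it is monotone, preserves and
reflects incompatibility, and its image is dense in `Q`. -/
structure IsDenseEmbeddingPO {P Q : Type*} [PartialOrder P] [PartialOrder Q]
    (i : P → Q) : Prop where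
  mono : ∀ p' p : P, p' ≤ p → i p' ≤ i p
  incompat_iff : ∀ p p' : P, ¬ Compat p p' ↔ ¬ Compat (i p) (i p')
  dense_image : DenseBelow (Set.range i)

/-- Let `i : P → Q` be a dense embedding of partial orders and let `H` be a filter on `Q`
meeting `i '' D` for every dense `D ⊆ P`.  Then `G := i⁻¹(H)` is a filter on `P` meeting
every dense subset of `P`, and `H = {q : ∃ p ∈ G, i p ≤ q}`. -/
theorem stmt7 {P Q : Type*} [PartialOrder P] [PartialOrder Q]
    (i : P → Q) (hi : IsDenseEmbeddingPO i)
    (H : Set Q) (hH : IsPOFilter H)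
    (hHmeet : ∀ D : Set P, DenseBelow D → (H ∩ i '' D).Nonempty) :
    IsPOFilter (i ⁻¹' H) ∧
    (∀ D : Set P, DenseBelow D → ((i ⁻¹' H) ∩ D).Nonempty) ∧
    H = {q : Q | ∃ p ∈ i ⁻¹' H, i p ≤ q} := by
  obtain ⟨hHup, hHdir⟩ := hH
  -- H elements are pairwise compatible
  have hcompat : ∀ x y, x ∈ H → y ∈ H → Compat x y := by
    intro x y hx hy
    obtain ⟨r, hr, hrx, hry⟩ := hHdir x y hx hy
    exact ⟨r, hrx, hry⟩
  refine ⟨⟨?_, ?_⟩, ?_, ?_⟩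
  · intro p q hp hpq
    exact hHup (i p) (i q) hp (hi.mono p q hpq)
  · intro p q hp hq
    set D : Set P := {r | (r ≤ p ∧ r ≤ q) ∨ ¬ Compat r p ∨ ¬ Compat r q} with hD
    have hDdense : DenseBelow D := by
      intro s
      by_cases h1 : Compat s p
      · obtain ⟨t, hts, htp⟩ := h1
        by_cases h2 : Compat t q
        · obtain ⟨u, hut, huq⟩ := h2
          exact ⟨u, Or.inl ⟨hut.trans htp, huq⟩, hut.trans hts⟩
        · exact ⟨t, Or.inr (Or.inr h2), hts⟩
      · exact ⟨s, Or.inr (Or.inl h1), le_refl s⟩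
    obtain ⟨x, hxH, r, hrD, hrx⟩ := hHmeet D hDdense
    subst hrx
    rcases hrD with h | h | h
    · exact ⟨r, hxH, h.1, h.2⟩
    · exact absurd (hcompat (i r) (i p) hxH hp) ((hi.incompat_iff r p).mp h)
    · exact absurd (hcompat (i r) (i q) hxH hq) ((hi.incompat_iff r q).mp h)
  · intro D hDdense
    obtain ⟨x, hxH, p, hpD, hpx⟩ := hHmeet D hDdense
    exact ⟨p, by simpa [Set.mem_preimage, hpx] using hxH, hpD⟩
  · ext q
    constructor
    · intro hq
      set D : Set P := {p | i p ≤ q ∨ ¬ Compat (i p) q} with hD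
      have hDdense : DenseBelow D := by
        intro s
        by_cases h1 : Compat (i s) q
        · obtain ⟨r, hrs, hrq⟩ := h1
          obtain ⟨x, ⟨p, rfl⟩, hpr⟩ := hi.dense_image r
          have hcompatps : Compat p s := by
            by_contra hc
            exact ((hi.incompat_iff p s).mp hc) ⟨i p, le_refl _, hpr.trans hrs⟩
          obtain ⟨t, htp, hts⟩ := hcompatps
          exact ⟨t, Or.inl ((hi.mono t p htp).trans (hpr.trans hrq)), hts⟩
        · exact ⟨s, Or.inr h1, le_refl s⟩
      obtain ⟨x, hxH, p, hpD, hpx⟩ := hHmeet D hDdense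
      subst hpx
      rcases hpD with h | h
      · exact ⟨p, hxH, h⟩
      · exact absurd (hcompat (i p) q hxH hq) h
    · rintro ⟨p, hp, hpq⟩
      exact hHup (i p) q hp hpq
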